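/- In the extended Matsuo algebra \hat{A}^α_3(G,D) of a k-regular 3-transposition group, for any d ∈ D: d^ρ_- · id_A = (α/(2+αk))·(k·d^ρ_- + Σ_{c∈N_D(d)}(c^ρ_+ - c^ρ_-)), where id_A = (1+αk/2)^{-1}Σ_{c∈D}c^ρ_+. -/

import Mathlib

/-!
Multiplying `d^ρ_-` into `Σ_{c ∈ D} c^ρ_+` kills every `c` commuting with `d`, and each
`c ∈ N_D(d)` contributes `(α/2)(d^ρ_- + c^ρ_+ - (c⁻¹dc)^ρ_-)`. Since `A` is commutative, expanding
`c^ρ_+ d^ρ_-` as well gives `(c⁻¹dc)^ρ_- = (d⁻¹cd)^ρ_-`, and conjugation by `d` permutes `N_D(d)`,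
so these last terms add up to `Σ_{c ∈ N_D(d)} c^ρ_-`.
-/

open Finset

theorem commute_conj_self_iff {G : Type*} [Group G] (c d : G) :
    Commute (d⁻¹ * c * d) d ↔ Commute c d := by
  simpa using Commute.conj_iff (a := c) (b := d) d⁻¹

theorem Finset.sum_filter_not_commute_conj {G M : Type*} [Group G] [AddCommMonoid M]
    {D : Finset G} (hnorm : ∀ c ∈ D, ∀ g : G, g⁻¹ * c * g ∈ D) (d : G)
    [DecidablePred fun c : G => ¬ Commute c d] (f : G → M) :
    ∑ c ∈ D.filter (fun c => ¬ Commute c d), f (d⁻¹ * c * d)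
      = ∑ c ∈ D.filter (fun c => ¬ Commute c d), f c := by
  refine sum_equiv (MulAut.conj d⁻¹).toEquiv (fun c => ?_) (fun c _ => by simp)
  have hconj : (MulAut.conj d⁻¹).toEquiv c = d⁻¹ * c * d := by simp
  rw [hconj, mem_filter, mem_filter, commute_conj_self_iff]
  refine and_congr_left fun _ => ⟨fun hc => hnorm c hc d, fun hc => ?_⟩
  simpa [mul_assoc] using hnorm _ hc d⁻¹

section MatsuoProducts

variable {G A : Type*} [Group G] [NonUnitalNonAssocCommRing A]
  {D : Finset G} {α : ℚ} {ρ : Bool → G → A}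

theorem rho_conj_eq_of_not_commute [Module ℚ A] (hα0 : α ≠ 0)
    (hmul_ncomm : ∀ c ∈ D, ∀ d ∈ D, ∀ ε ε' : Bool, ¬ Commute c d →
      ρ ε c * ρ ε' d = (α/2) • (ρ ε c + ρ ε' d - ρ (ε == ε') (d⁻¹ * c * d)))
    {c d : G} (hc : c ∈ D) (hd : d ∈ D) (hcd : ¬ Commute c d) (ε ε' : Bool) :
    ρ (ε == ε') (c⁻¹ * d * c) = ρ (ε == ε') (d⁻¹ * c * d) := by
  have h := hmul_ncomm d hd c hc ε ε' fun h => hcd h.symm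
  rw [mul_comm, hmul_ncomm c hc d hd ε' ε hcd, Bool.beq_comm, add_comm (ρ ε' c)] at h
  exact (sub_right_injective (smul_right_injective A (div_ne_zero hα0 two_ne_zero) h)).symm

theorem rho_mul_sum_eq_sum_filter_not_commute
    (hmul_comm : ∀ c ∈ D, ∀ d ∈ D, ∀ ε ε' : Bool, ¬ (c = d ∧ ε = ε') → Commute c d →
      ρ ε c * ρ ε' d = 0)
    {d : G} (hd : d ∈ D) [DecidablePred fun c : G => ¬ Commute c d]
    {ε ε' : Bool} (hεε' : ε ≠ ε') :
    ρ ε d * ∑ c ∈ D, ρ ε' c = ∑ c ∈ D.filter (fun c => ¬ Commute c d), ρ ε d * ρ ε' c := by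
  rw [mul_sum, ← sum_filter_add_sum_filter_not D fun c => ¬ Commute c d, add_eq_left]
  refine sum_eq_zero fun c hc => ?_
  rw [mem_filter, not_not] at hc
  exact hmul_comm d hd c hc.1 ε ε' (fun h => hεε' h.2) hc.2.symm

theorem sum_filter_not_commute_rho_mul [Module ℚ A] (hα0 : α ≠ 0)
    (hnorm : ∀ c ∈ D, ∀ g : G, g⁻¹ * c * g ∈ D)
    (hmul_ncomm : ∀ c ∈ D, ∀ d ∈ D, ∀ ε ε' : Bool, ¬ Commute c d →
      ρ ε c * ρ ε' d = (α/2) • (ρ ε c + ρ ε' d - ρ (ε == ε') (d⁻¹ * c * d)))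
    {d : G} (hd : d ∈ D) [DecidablePred fun c : G => ¬ Commute c d] (ε ε' : Bool) :
    ∑ c ∈ D.filter (fun c => ¬ Commute c d), ρ ε d * ρ ε' c
      = (α/2) • ((D.filter fun c => ¬ Commute c d).card • ρ ε d
          + ∑ c ∈ D.filter (fun c => ¬ Commute c d), (ρ ε' c - ρ (ε == ε') c)) := by
  have hexpand : ∀ c ∈ D.filter (fun c => ¬ Commute c d), ρ ε d * ρ ε' c
      = (α/2) • (ρ ε d + ρ ε' c - ρ (ε == ε') (d⁻¹ * c * d)) := by
    intro c hc
    rw [mem_filter] at hc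
    rw [hmul_ncomm d hd c hc.1 ε ε' fun h => hc.2 h.symm,
      rho_conj_eq_of_not_commute hα0 hmul_ncomm hc.1 hd hc.2]
  rw [sum_congr rfl hexpand, ← smul_sum, sum_sub_distrib, sum_add_distrib, sum_const,
    sum_filter_not_commute_conj hnorm d, sum_sub_distrib, add_sub_assoc]

end MatsuoProducts

open scoped Classical in
theorem extended_matsuo_minus_mul_id_general {G A : Type*} [Group G]
    [NonUnitalNonAssocCommRing A] [Module ℚ A] [SMulCommClass ℚ A A]
    (D : Finset G) (α : ℚ) (hα0 : α ≠ 0) (ρ : Bool → G → A)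
    (hnorm : ∀ c ∈ D, ∀ g : G, g⁻¹ * c * g ∈ D)
    (hmul_comm : ∀ c ∈ D, ∀ d ∈ D, ∀ ε ε' : Bool, ¬ (c = d ∧ ε = ε') → Commute c d →
      ρ ε c * ρ ε' d = 0)
    (hmul_ncomm : ∀ c ∈ D, ∀ d ∈ D, ∀ ε ε' : Bool, ¬ Commute c d →
      ρ ε c * ρ ε' d = (α/2) • (ρ ε c + ρ ε' d - ρ (ε == ε') (d⁻¹ * c * d)))
    (k : ℕ) (hreg : ∀ d ∈ D, (D.filter fun c => ¬ Commute c d).card = k)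
    (hden : 2 + α * k ≠ 0)
    (d : G) (hd : d ∈ D) :
    ρ false d * ((1 + α * k / 2)⁻¹ • ∑ c ∈ D, ρ true c)
      = (α / (2 + α * k)) •
          ((k : ℚ) • ρ false d
            + ∑ c ∈ D.filter (fun c => ¬ Commute c d), (ρ true c - ρ false c)) := by
  have h1 : (1 + α * k / 2 : ℚ) ≠ 0 := fun h => hden (by linarith)
  rw [mul_smul_comm, rho_mul_sum_eq_sum_filter_not_commute hmul_comm hd Bool.false_ne_true,
    sum_filter_not_commute_rho_mul hα0 hnorm hmul_ncomm hd, hreg d hd, smul_smul,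
    Nat.cast_smul_eq_nsmul]
  congr 1
  field_simp

open scoped Classical in
/-- in the extended Matsuo algebra `Â^α_3(G,D)` of a `k`-regular
3-transposition group (basis `d^ρ_± = ρ true d, ρ false d`), for any `d ∈ D`,
`d^ρ_- · id_A = (α/(2+αk)) (k d^ρ_- + Σ_{c ∈ N_D(d)} (c^ρ_+ - c^ρ_-))`,
where `id_A = (1+αk/2)⁻¹ Σ_{c ∈ D} c^ρ_+`. -/
theorem extended_matsuo_minus_mul_id {G A : Type*} [Group G]
    [NonUnitalNonAssocCommRing A] [Module ℚ A] [SMulCommClass ℚ A A] [IsScalarTower ℚ A A]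
    (D : Finset G) (α : ℚ) (hα0 : α ≠ 0) (hα1 : α ≠ 1) (ρ : Bool → G → A)
    (hinv : ∀ d ∈ D, d * d = 1) (hne1 : ∀ d ∈ D, d ≠ 1)
    (hnorm : ∀ c ∈ D, ∀ g : G, g⁻¹ * c * g ∈ D)
    (h3trans : ∀ c ∈ D, ∀ d ∈ D, orderOf (c * d) ≤ 3)
    (hmul_self : ∀ d ∈ D, ∀ ε : Bool, ρ ε d * ρ ε d = ρ ε d)
    (hmul_comm : ∀ c ∈ D, ∀ d ∈ D, ∀ ε ε' : Bool, ¬ (c = d ∧ ε = ε') → Commute c d →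
      ρ ε c * ρ ε' d = 0)
    (hmul_ncomm : ∀ c ∈ D, ∀ d ∈ D, ∀ ε ε' : Bool, ¬ Commute c d →
      ρ ε c * ρ ε' d = (α/2) • (ρ ε c + ρ ε' d - ρ (ε == ε') (d⁻¹ * c * d)))
    (k : ℕ) (hreg : ∀ d ∈ D, (D.filter fun c => ¬ Commute c d).card = k)
    (hden : 2 + α * k ≠ 0)
    (d : G) (hd : d ∈ D) :
    ρ false d * ((1 + α * k / 2)⁻¹ • ∑ c ∈ D, ρ true c)
      = (α / (2 + α * k)) •
          ((k : ℚ) • ρ false d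
            + ∑ c ∈ D.filter (fun c => ¬ Commute c d), (ρ true c - ρ false c)) :=
  extended_matsuo_minus_mul_id_general D α hα0 ρ hnorm hmul_comm hmul_ncomm k hreg hden d hd
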